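/- arXiv:1008.0430 — 4 statements merged into one kernel-verified Lean document; each statement's English description precedes it below -/
import Mathlib

section
/- Let p ≡ 1 (mod 4) and let α, β be nonzero relatively prime polynomials in F_p[T]. Then the Jacobi symbol (α/β) equals the product over places v dividing β of the Hilbert symbols (α,β)_v. -/
/- Statement 1: for coprime nonzero α, β ∈ 𝔽_p[T] (p ≡ 1 mod 4), the Jacobi
symbol (α/β) equals the product over the finite places v dividing β of the
local Hilbert symbols (α,β)_v. -/

open Polynomial UniqueFactorizationMonoid IsDedekindDomain

noncomputable section
open scoped Classical BigOperators
set_option synthInstance.maxHeartbeats 1000000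

/-- The Legendre symbol `(d/q)` for `q` irreducible in `𝔽_p[T]`. -/
def legSym (p : ℕ) (d q : Polynomial (ZMod p)) : ℤ :=
  if ¬ IsCoprime q d then 0 else if ∃ e, q ∣ e ^ 2 - d then 1 else -1

/-- The Jacobi symbol `(d/c)` over `𝔽_p[T]`, extended multiplicatively in `c`
from the Legendre symbol at the irreducible factors of `c`. -/
def jacobiP (p : ℕ) [Fact p.Prime] (d c : Polynomial (ZMod p)) : ℤ :=
  ((normalizedFactors c).map (fun q => legSym p d q)).prod

/-- The Hilbert symbol at a finite place `v` of `k = 𝔽_p(T)`: it is `1` iff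
`z² = x·a² + y·b²` has a nontrivial solution in the completion `k_v`, and `-1`
otherwise. -/
def hilbertFin (p : ℕ) [Fact p.Prime]
    (v : HeightOneSpectrum (Polynomial (ZMod p))) (x y : RatFunc (ZMod p)) : ℤ :=
  if ∃ a b c : v.adicCompletion (RatFunc (ZMod p)), ¬(a = 0 ∧ b = 0 ∧ c = 0) ∧
      c ^ 2 = algebraMap (RatFunc (ZMod p)) _ x * a ^ 2
            + algebraMap (RatFunc (ZMod p)) _ y * b ^ 2
  then 1 else -1

/-! At a place `v ∤ 2` where `α` is a unit, `(α, β)_v = (α/v) ^ v(β)`. If `α` is a square modulo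
`v`, Newton's iteration makes it a square in the completion `K_v`. If `v(β)` is even, the conic
`c² = α a² + β b²` reduces to `c² - α a² = γ` with `γ` a unit; this has a solution modulo `v`
because the residue field is finite of odd order, and it lifts to `K_v` by Newton's iteration
again. If `α` is not a square modulo `v`, then `v(c² - α a²)` is always even, so for `v(β)` odd
the conic has no point. In `𝔽_p[T]` the places dividing `β` are the monic irreducible factors `q`
of `β` with `v(β)` the multiplicity of `q`, so the product of the local symbols is the product
of the Legendre symbols `(α/q)` counted with multiplicity, which is the Jacobi symbol. -/

def IsHilbertTrivial {L : Type*} [Field L] (x y : L) : Prop :=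
  ∃ a b c : L, ¬(a = 0 ∧ b = 0 ∧ c = 0) ∧ c ^ 2 = x * a ^ 2 + y * b ^ 2

section HilbertTrivial

variable {L : Type*} [Field L] {x y : L}

theorem isHilbertTrivial_of_isSquare (hx : IsSquare x) : IsHilbertTrivial x y := by
  obtain ⟨t, rfl⟩ := hx
  exact ⟨1, 0, t, by simp, by ring⟩

theorem isHilbertTrivial_of_sq_eq_add {a t : L} (ht : t ^ 2 = x * a ^ 2 + y) :
    IsHilbertTrivial x y :=
  ⟨a, 1, t, by simp, by rw [ht, one_pow, mul_one]⟩

theorem isHilbertTrivial_of_sq_eq_neg_mul {t : L} (hx : x ≠ 0) (ht : t ^ 2 = -(x * y)) :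
    IsHilbertTrivial x y :=
  ⟨t, x, 0, by simp [hx], by linear_combination -x * ht⟩

theorem IsHilbertTrivial.mul_sq_right (h : IsHilbertTrivial x y) {s : L} (hs : s ≠ 0) :
    IsHilbertTrivial x (s ^ 2 * y) := by
  obtain ⟨a, b, c, hne, h⟩ := h
  refine ⟨a, b / s, c, by simpa [hs] using hne, ?_⟩
  rw [h]
  field_simp

end HilbertTrivial

section Valuation

variable {L Γ₀ : Type*} [Field L] [LinearOrderedCommGroupWithZero Γ₀] (v : Valuation L Γ₀)

-- `hnsq` says that the unit `u` is not a square in the residue field.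
theorem Valuation.isSquare_map_sq_sub_mul_sq {u : L} (hu : v u = 1)
    (hnsq : ∀ t, 1 ≤ v (t ^ 2 - u)) (c a : L) : IsSquare (v (c ^ 2 - u * a ^ 2)) := by
  rcases eq_or_ne a 0 with rfl | ha
  · exact ⟨v c, by simp [sq]⟩
  rcases eq_or_ne (v c) (v a) with hca | hca
  · have hunit : v ((c / a) ^ 2 - u) = 1 :=
      le_antisymm ((v.map_sub _ _).trans (by simp [hca, hu, v.ne_zero_iff.mpr ha])) (hnsq _)
    have hfac : c ^ 2 - u * a ^ 2 = a ^ 2 * ((c / a) ^ 2 - u) := by field_simp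
    exact ⟨v a, by rw [hfac, map_mul, hunit, map_pow, mul_one, sq]⟩
  · have hsq : v (c ^ 2) ≠ v (u * a ^ 2) := by
      simpa [hu] using fun h => hca ((pow_left_inj₀ zero_le zero_le two_ne_zero).mp h)
    rw [sub_eq_add_neg, v.map_add_of_distinct_val (by rwa [v.map_neg]), v.map_neg, map_mul, hu,
      one_mul, map_pow, map_pow]
    rcases max_choice (v c ^ 2) (v a ^ 2) with h | h <;> rw [h] <;> exact ⟨_, sq _⟩

theorem Valuation.not_isHilbertTrivial {u y : L} (hu : v u = 1) (hnsq : ∀ t, 1 ≤ v (t ^ 2 - u))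
    (hy : ¬ IsSquare (v y)) : ¬ IsHilbertTrivial u y := by
  rintro ⟨a, b, c, hne, h⟩
  rcases eq_or_ne b 0 with rfl | hb
  · have ha : a ≠ 0 := by
      rintro rfl
      exact hne ⟨rfl, rfl, pow_eq_zero_iff two_ne_zero |>.mp (by simpa using h)⟩
    have hroot : (c / a) ^ 2 - u = 0 := by field_simp; linear_combination h
    simpa [hroot] using hnsq (c / a)
  · obtain ⟨r, hr⟩ := v.isSquare_map_sq_sub_mul_sq hu hnsq c a
    have hvb : v b ≠ 0 := v.ne_zero_iff.mpr hb
    refine hy ⟨r / v b, ?_⟩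
    have : v y * v b ^ 2 = r * r := by rw [← hr, h, add_sub_cancel_left, map_mul, map_pow]
    rw [div_mul_div_comm, ← this, ← sq, mul_div_assoc, div_self (pow_ne_zero 2 hvb), mul_one]

def sqrtNewtonStep (w x : L) : L := (x + w / x) / 2

theorem Valuation.map_sqrtNewtonStep (h2 : v 2 = 1) {w x : L} (hx : v x = 1) :
    v (sqrtNewtonStep w x - x) = v (x ^ 2 - w) ∧
      v (sqrtNewtonStep w x ^ 2 - w) = v (x ^ 2 - w) ^ 2 := by
  have hx0 : x ≠ 0 := v.ne_zero_iff.mp (by simp [hx])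
  have h20 : (2 : L) ≠ 0 := v.ne_zero_iff.mp (by simp [h2])
  have h2x : v (2 * x) = 1 := by rw [map_mul, h2, hx, one_mul]
  constructor
  · rw [show sqrtNewtonStep w x - x = -(x ^ 2 - w) / (2 * x) by
      unfold sqrtNewtonStep; field_simp; ring, map_div₀, h2x, div_one, v.map_neg]
  · rw [show sqrtNewtonStep w x ^ 2 - w = (x ^ 2 - w) ^ 2 / (2 * x) ^ 2 by
      unfold sqrtNewtonStep; field_simp; ring, map_div₀, map_pow, map_pow, h2x, one_pow, div_one]

end Valuation

section Newton

open Filter Topology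

variable {L Γ₀ : Type*} [Field L] [LinearOrderedCommGroupWithZero Γ₀] [Valued L Γ₀]

theorem Valued.cauchySeq_of_v_sub_succ_le_pow [MulArchimedean Γ₀] {x : ℕ → L} {δ : Γ₀}
    (hδ : δ < 1) (h : ∀ n, Valued.v (x (n + 1) - x n) ≤ δ ^ n) : CauchySeq x := by
  have tail : ∀ n m, n ≤ m → Valued.v (x m - x n) ≤ δ ^ n := by
    intro n m hnm
    induction m, hnm using Nat.le_induction with
    | base => simp
    | succ m hnm ih =>
      rw [← sub_add_sub_cancel]
      exact (Valuation.map_add _ _ _).trans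
        (max_le ((h m).trans (pow_le_pow_right_of_le_one' hδ.le hnm)) ih)
  rw [(Valued.hasBasis_uniformity L Γ₀).cauchySeq_iff]
  intro γ _
  obtain ⟨N, hN⟩ := exists_pow_lt₀ hδ
    (Units.map (MonoidWithZeroHom.ValueGroup₀.embedding
      (f := .ofClass (Valued.v : Valuation L Γ₀))) γ)
  refine ⟨N, fun m hm n hn => ?_⟩
  rw [Set.mem_ofPred_eq, Valuation.restrict_lt_iff_lt_embedding,
    ← sub_sub_sub_cancel_right _ _ (x N)]
  exact ((Valuation.map_sub _ _ _).trans (max_le (tail N n hn) (tail N m hm))).trans_lt hN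

theorem Valued.tendsto_zero_of_v_le {ι : Type*} {l : Filter ι} {f g : ι → L}
    (hfg : ∀ i, Valued.v (f i) ≤ Valued.v (g i)) (hg : Tendsto g l (𝓝 0)) :
    Tendsto f l (𝓝 0) := by
  rw [(Valued.hasBasis_nhds_zero L Γ₀).tendsto_right_iff] at hg ⊢
  intro γ _
  filter_upwards [hg γ trivial] with i hi
  simp only [Valuation.restrict_lt_iff_lt_embedding] at hi ⊢
  exact (hfg i).trans_lt hi

theorem Valued.exists_sq_eq_of_v_sq_sub_lt_one [MulArchimedean Γ₀] [CompleteSpace L]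
    (h2 : Valued.v (2 : L) = 1) {c₀ w : L} (hc₀ : Valued.v c₀ = 1)
    (hw : Valued.v (c₀ ^ 2 - w) < 1) : ∃ c : L, c ^ 2 = w := by
  set δ := Valued.v (c₀ ^ 2 - w)
  let x : ℕ → L := fun n => (sqrtNewtonStep w)^[n] c₀
  have hsucc (n : ℕ) : x (n + 1) = sqrtNewtonStep w (x n) := Function.iterate_succ_apply' _ _ _
  have hx : ∀ n, Valued.v (x n) = 1 ∧ Valued.v (x n ^ 2 - w) ≤ δ ^ (n + 1) := by
    intro n
    induction n with
    | zero => simp [x, hc₀, δ]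
    | succ n ih =>
      have hstep := Valued.v.map_sqrtNewtonStep h2 (w := w) ih.1
      have hsmall : Valued.v (x n ^ 2 - w) < 1 :=
        ih.2.trans_lt (pow_lt_one₀ zero_le hw n.succ_ne_zero)
      refine ⟨?_, ?_⟩
      · rw [hsucc, ← sub_add_cancel (sqrtNewtonStep w (x n)) (x n),
          Valuation.map_add_eq_of_lt_right _ (by rwa [hstep.1, ih.1]), ih.1]
      · calc Valued.v (x (n + 1) ^ 2 - w) = Valued.v (x n ^ 2 - w) ^ 2 := by rw [hsucc, hstep.2]
          _ ≤ δ ^ (n + 1) * δ ^ (n + 1) := by rw [sq]; exact mul_le_mul' ih.2 ih.2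
          _ ≤ δ ^ (n + 1) * δ := by
            gcongr; simpa using pow_le_pow_right_of_le_one' hw.le n.succ_pos
          _ = δ ^ (n + 2) := (pow_succ _ _).symm
  have hcauchy : CauchySeq x := by
    refine Valued.cauchySeq_of_v_sub_succ_le_pow hw fun n => ?_
    rw [hsucc, (Valued.v.map_sqrtNewtonStep h2 (hx n).1).1]
    exact (hx n).2.trans (pow_le_pow_right_of_le_one' hw.le n.le_succ)
  obtain ⟨c, hc⟩ := cauchySeq_tendsto_of_complete hcauchy
  refine ⟨c, sub_eq_zero.mp (tendsto_nhds_unique ((hc.pow 2).sub_const w) ?_)⟩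
  refine Valued.tendsto_zero_of_v_le (g := fun n => (c₀ ^ 2 - w) ^ (n + 1)) (fun n => ?_)
    ((Valued.tendsto_zero_pow_of_v_lt_one hw).comp (tendsto_add_atTop_nat 1))
  simpa only [map_pow] using (hx n).2

end Newton

theorem Ideal.exists_sq_sub_mul_sq_sub_mem {R : Type*} [CommRing R] {I : Ideal R} [I.IsMaximal]
    [Finite (R ⧸ I)] (h2 : (2 : R) ∉ I) {α : R} (hα : α ∉ I) (γ : R) :
    ∃ c a : R, c ^ 2 - α * a ^ 2 - γ ∈ I := by
  let := Ideal.Quotient.field I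
  let := Fintype.ofFinite (R ⧸ I)
  have hchar : ringChar (R ⧸ I) ≠ 2 := fun h => h2 <| Ideal.Quotient.eq_zero_iff_mem.mp <| by
    simpa [h, map_ofNat] using ringChar.Nat.cast_ringChar (R := R ⧸ I)
  have hα' : Ideal.Quotient.mk I α ≠ 0 := fun h => hα (Ideal.Quotient.eq_zero_iff_mem.mp h)
  obtain ⟨c, a, h⟩ := FiniteField.exists_root_sum_quadratic
    (f := X ^ 2 - C (Ideal.Quotient.mk I γ)) (g := C (-Ideal.Quotient.mk I α) * X ^ 2)
    (degree_X_pow_sub_C two_pos _) (by rw [degree_C_mul_X_pow 2 (neg_ne_zero.mpr hα')]; rfl)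
    (FiniteField.odd_card_of_char_ne_two hchar)
  obtain ⟨c, rfl⟩ := Ideal.Quotient.mk_surjective c
  obtain ⟨a, rfl⟩ := Ideal.Quotient.mk_surjective a
  refine ⟨c, a, Ideal.Quotient.eq_zero_iff_mem.mp ?_⟩
  simp only [eval_sub, eval_mul, eval_pow, eval_X, eval_C] at h
  simp only [map_sub, map_mul, map_pow]
  linear_combination h

namespace IsDedekindDomain.HeightOneSpectrum

open Topology

variable {R : Type*} [CommRing R] [IsDedekindDomain R] {K : Type*} [Field K] [Algebra R K]
  [IsFractionRing R K] (v : HeightOneSpectrum R)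

theorem valued_algebraMap_adicCompletion (r : R) :
    Valued.v (algebraMap R (v.adicCompletion K) r) = v.intValuation r := by
  rw [algebraMap_adicCompletion, Function.comp_apply, valuedAdicCompletion_eq_valuation',
    valuation_of_algebraMap]

theorem valued_algebraMap_adicCompletion_lt_one_iff {r : R} :
    Valued.v (algebraMap R (v.adicCompletion K) r) < 1 ↔ r ∈ v.asIdeal := by
  rw [valued_algebraMap_adicCompletion, intValuation_lt_one_iff_mem]

theorem valued_algebraMap_adicCompletion_eq_one_iff {r : R} :
    Valued.v (algebraMap R (v.adicCompletion K) r) = 1 ↔ r ∉ v.asIdeal := by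
  rw [valued_algebraMap_adicCompletion, intValuation_eq_one_iff]

theorem exists_valued_algebraMap_sub_lt_one {t : v.adicCompletion K} (ht : Valued.v t ≤ 1) :
    ∃ r : R, Valued.v (algebraMap R (v.adicCompletion K) r - t) < 1 := by
  have hball : {y : v.adicCompletion K | Valued.v (y - t) < 1} ∈ 𝓝 t :=
    Valued.mem_nhds.mpr ⟨1, fun y hy => by simpa [Valuation.restrict_lt_iff_lt_embedding] using hy⟩
  obtain ⟨s, hs⟩ := (denseRange_algebraMap K v).mem_nhds hball
  have hs1 : v.valuation K s ≤ 1 := by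
    rw [← valuedAdicCompletion_eq_valuation', ← sub_add_cancel (s : v.adicCompletion K) t]
    exact (Valuation.map_add _ _ _).trans (max_le hs.le ht)
  obtain ⟨r, hr⟩ := exists_valuation_sub_lt_of_integer v hs1 1
  refine ⟨r, ?_⟩
  rw [← sub_add_sub_cancel _ (algebraMap K (v.adicCompletion K) s)]
  refine Valuation.map_add_lt _ ?_ hs
  rw [IsScalarTower.algebraMap_apply R K, ← map_sub, algebraMap_adicCompletion, Function.comp_apply,
    valuedAdicCompletion_eq_valuation']
  exact_mod_cast hr

theorem exists_sq_sub_mem_of_valued_sq_sub_lt_one {α : R} {t : v.adicCompletion K}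
    (h : Valued.v (t ^ 2 - algebraMap R (v.adicCompletion K) α) < 1) :
    ∃ e : R, e ^ 2 - α ∈ v.asIdeal := by
  set u := algebraMap R (v.adicCompletion K) α
  have hu : Valued.v u ≤ 1 := by
    rw [valued_algebraMap_adicCompletion (K := K)]
    exact v.intValuation_le_one α
  have ht : Valued.v t ≤ 1 := by
    refine (pow_le_one_iff two_ne_zero).mp ?_
    rw [← map_pow, ← sub_add_cancel (t ^ 2) u]
    exact (Valuation.map_add _ _ _).trans (max_le h.le hu)
  obtain ⟨e, he⟩ := exists_valued_algebraMap_sub_lt_one v ht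
  set E := algebraMap R (v.adicCompletion K) e
  have hE : Valued.v (E + t) ≤ 1 := (Valuation.map_add _ _ _).trans <| max_le
    (by rw [valued_algebraMap_adicCompletion]; exact v.intValuation_le_one e) ht
  refine ⟨e, (valued_algebraMap_adicCompletion_lt_one_iff v (K := K)).mp ?_⟩
  rw [show algebraMap R (v.adicCompletion K) (e ^ 2 - α) = (E - t) * (E + t) + (t ^ 2 - u) by
    simp only [E, u, map_sub, map_pow]; ring]
  refine Valuation.map_add_lt _ ?_ h
  rw [map_mul]
  exact (mul_le_of_le_one_right zero_le hE).trans_lt he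

variable [Finite (R ⧸ v.asIdeal)]

theorem isHilbertTrivial_of_valued_eq_one (h2 : (2 : R) ∉ v.asIdeal) {α : R}
    (hα : α ∉ v.asIdeal) {y : v.adicCompletion K} (hy : Valued.v y = 1) :
    IsHilbertTrivial (algebraMap R (v.adicCompletion K) α) y := by
  set u := algebraMap R (v.adicCompletion K) α
  have hv2 : Valued.v (2 : v.adicCompletion K) = 1 := by
    simpa only [map_ofNat] using (valued_algebraMap_adicCompletion_eq_one_iff v (K := K)).mpr h2
  have hu : Valued.v u = 1 := (valued_algebraMap_adicCompletion_eq_one_iff v).mpr hα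
  obtain ⟨g, hg⟩ := exists_valued_algebraMap_sub_lt_one v hy.le
  have hgv : g ∉ v.asIdeal := by
    rw [← valued_algebraMap_adicCompletion_eq_one_iff v (K := K),
      ← sub_add_cancel (algebraMap R _ g) y, Valuation.map_add_eq_of_lt_right _ (hy ▸ hg), hy]
  obtain ⟨c, a, hca⟩ := Ideal.exists_sq_sub_mul_sq_sub_mem h2 hα g
  set C := algebraMap R (v.adicCompletion K) c
  set A := algebraMap R (v.adicCompletion K) a
  have hsmall : Valued.v (C ^ 2 - u * A ^ 2 - y) < 1 := by
    rw [show C ^ 2 - u * A ^ 2 - y = algebraMap R _ (c ^ 2 - α * a ^ 2 - g) + (algebraMap R _ g - y)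
      by simp only [C, A, u, map_sub, map_mul, map_pow]; ring]
    exact Valuation.map_add_lt _ ((valued_algebraMap_adicCompletion_lt_one_iff v).mpr hca) hg
  -- Newton's iteration needs an approximate root that is a unit: `C` if it is one, and
  -- otherwise `u * A`, an approximate square root of `-(u * y)`.
  by_cases hc : c ∈ v.asIdeal
  · have ha : a ∉ v.asIdeal := fun ha => hgv <| by
      have := v.asIdeal.sub_mem (v.asIdeal.sub_mem (v.asIdeal.pow_mem_of_mem hc 2 two_pos)
        (v.asIdeal.mul_mem_left α (v.asIdeal.pow_mem_of_mem ha 2 two_pos))) hca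
      rwa [sub_sub_cancel] at this
    have hC : Valued.v (C ^ 2) < 1 := by
      rw [← map_pow]; exact (valued_algebraMap_adicCompletion_lt_one_iff v).mpr
        (v.asIdeal.pow_mem_of_mem hc 2 two_pos)
    obtain ⟨t, ht⟩ := Valued.exists_sq_eq_of_v_sq_sub_lt_one hv2 (c₀ := u * A) (w := -(u * y))
      (by rw [map_mul, hu, (valued_algebraMap_adicCompletion_eq_one_iff v).mpr ha, one_mul]) (by
        rw [show (u * A) ^ 2 - -(u * y) = u * (C ^ 2 - (C ^ 2 - u * A ^ 2 - y)) by ring, map_mul,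
          hu, one_mul]
        exact Valuation.map_sub_lt _ hC hsmall)
    exact isHilbertTrivial_of_sq_eq_neg_mul (Valued.v.ne_zero_iff.mp (by simp [hu])) ht
  · obtain ⟨t, ht⟩ := Valued.exists_sq_eq_of_v_sq_sub_lt_one hv2 (c₀ := C) (w := u * A ^ 2 + y)
      ((valued_algebraMap_adicCompletion_eq_one_iff v).mpr hc) (by rwa [← sub_sub])
    exact isHilbertTrivial_of_sq_eq_add ht

theorem isHilbertTrivial_iff (h2 : (2 : R) ∉ v.asIdeal) {α : R} (hα : α ∉ v.asIdeal)
    {y : v.adicCompletion K} (hy : y ≠ 0) :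
    IsHilbertTrivial (algebraMap R (v.adicCompletion K) α) y ↔
      (∃ e : R, e ^ 2 - α ∈ v.asIdeal) ∨ IsSquare (Valued.v y) := by
  have hu := (valued_algebraMap_adicCompletion_eq_one_iff v (K := K)).mpr hα
  have hv2 : Valued.v (2 : v.adicCompletion K) = 1 := by
    simpa only [map_ofNat] using (valued_algebraMap_adicCompletion_eq_one_iff v (K := K)).mpr h2
  constructor
  · intro h
    by_contra hne
    obtain ⟨hres, hsq⟩ := not_or.mp hne
    exact Valued.v.not_isHilbertTrivial hu (fun t => not_lt.mp fun ht =>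
      hres (exists_sq_sub_mem_of_valued_sq_sub_lt_one v ht)) hsq h
  · rintro (⟨e, he⟩ | ⟨r, hr⟩)
    · have he' : e ∉ v.asIdeal := fun he' => hα <| by
        simpa using v.asIdeal.sub_mem (v.asIdeal.pow_mem_of_mem he' 2 two_pos) he
      obtain ⟨t, ht⟩ := Valued.exists_sq_eq_of_v_sq_sub_lt_one hv2
        ((valued_algebraMap_adicCompletion_eq_one_iff v).mpr he')
        (by simpa using (valued_algebraMap_adicCompletion_lt_one_iff v (K := K)).mpr he)
      exact isHilbertTrivial_of_isSquare ⟨t, by rw [← ht, sq]⟩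
    · obtain ⟨s, hs⟩ := valuedAdicCompletion_surjective K v r
      have hs0 : s ≠ 0 := by
        rintro rfl
        exact hy (Valued.v.zero_iff.mp (by rw [hr, ← hs, map_zero, zero_mul]))
      rw [show y = s ^ 2 * (y / s ^ 2) by field_simp]
      refine (isHilbertTrivial_of_valued_eq_one v h2 hα ?_).mul_sq_right hs0
      rw [map_div₀, map_pow, hs, hr, sq, div_self (mul_ne_zero ?_ ?_)] <;>
        exact hs ▸ Valued.v.ne_zero_iff.mpr hs0

end IsDedekindDomain.HeightOneSpectrum

theorem WithZero.isSquare_exp_iff {G : Type*} [AddGroup G] {a : G} :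
    IsSquare (WithZero.exp a) ↔ Even a := by
  constructor
  · rintro ⟨r, hr⟩
    have hr0 : r ≠ 0 := by rintro rfl; simp at hr
    refine ⟨WithZero.log r, WithZero.exp_injective ?_⟩
    rw [hr, WithZero.exp_add, WithZero.exp_log hr0]
  · rintro ⟨b, rfl⟩
    exact ⟨WithZero.exp b, WithZero.exp_add b b⟩

instance Polynomial.hasFiniteQuotients {F : Type*} [Field F] [Finite F] :
    Ring.HasFiniteQuotients F[X] where
  finiteQuotient {I} hI := by
    obtain ⟨g, rfl⟩ := (IsPrincipalIdealRing.principal I).principal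
    have hg : g ≠ 0 := by rintro rfl; simp at hI
    have := (AdjoinRoot.powerBasis hg).finite
    exact Module.finite_of_finite F (M := AdjoinRoot g)

namespace IsDedekindDomain.HeightOneSpectrum

variable {R : Type*} [CommRing R] [IsDomain R] [IsPrincipalIdealRing R] [NormalizationMonoid R]
  (v : HeightOneSpectrum R)

theorem intValuation_eq_exp_neg_count [DecidableEq R] {q : R} (hq : v.asIdeal = Ideal.span {q})
    (hqn : normalize q = q) {β : R} (hβ : β ≠ 0) :
    v.intValuation β = WithZero.exp (-((normalizedFactors β).count q : ℤ)) := by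
  have hq0 : q ≠ 0 := by rintro rfl; exact v.ne_bot (by simpa using hq)
  have hprime : Prime q := (Ideal.span_singleton_prime hq0).mp (hq ▸ v.isPrime)
  rw [← hqn, ← multiplicity_eq_count_normalizedFactors hprime.irreducible hβ]
  obtain ⟨γ, hβγ, hγ⟩ := (FiniteMultiplicity.of_prime_left hprime hβ).exists_eq_pow_mul_and_not_dvd
  have hγv : γ ∉ v.asIdeal := by rwa [hq, Ideal.mem_span_singleton]
  conv_lhs => rw [hβγ]
  rw [map_mul, map_pow, intValuation_singleton v hq0 hq, intValuation_eq_one_iff.mpr hγv, mul_one,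
    ← WithZero.exp_nsmul, nsmul_eq_mul, mul_neg_one]

def normalizedGenerator : R := normalize (Submodule.IsPrincipal.generator v.asIdeal)

theorem asIdeal_eq_span_normalizedGenerator : v.asIdeal = Ideal.span {v.normalizedGenerator} := by
  rw [normalizedGenerator, Ideal.span_singleton_eq_span_singleton.mpr (normalize_associated _),
    Ideal.span_singleton_generator]

theorem prime_normalizedGenerator : Prime v.normalizedGenerator := by
  have hne : v.normalizedGenerator ≠ 0 := by
    intro h
    exact v.ne_bot (by rw [asIdeal_eq_span_normalizedGenerator, h, Ideal.span_singleton_eq_bot])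
  exact (Ideal.span_singleton_prime hne).mp (v.asIdeal_eq_span_normalizedGenerator ▸ v.isPrime)

theorem bijOn_normalizedGenerator [DecidableEq R] {β : R} (hβ : β ≠ 0) :
    Set.BijOn normalizedGenerator {v : HeightOneSpectrum R | β ∈ v.asIdeal}
      ((normalizedFactors β).toFinset : Set R) := by
  refine ⟨fun v hv => ?_, fun v _ w _ h => ?_, fun q hq => ?_⟩
  · rw [Finset.mem_coe, Multiset.mem_toFinset, mem_normalizedFactors_iff' hβ]
    refine ⟨v.prime_normalizedGenerator.irreducible, normalize_idem _, ?_⟩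
    rw [← Ideal.mem_span_singleton, ← asIdeal_eq_span_normalizedGenerator]
    exact hv
  · ext1
    rw [asIdeal_eq_span_normalizedGenerator, asIdeal_eq_span_normalizedGenerator, h]
  · rw [Finset.mem_coe, Multiset.mem_toFinset] at hq
    have hprime := prime_of_normalized_factor q hq
    let w : HeightOneSpectrum R := ⟨Ideal.span {q},
      (Ideal.span_singleton_prime hprime.ne_zero).mpr hprime, by simpa using hprime.ne_zero⟩
    refine ⟨w, Ideal.mem_span_singleton.mpr (dvd_of_mem_normalizedFactors hq), ?_⟩
    rw [← normalize_normalized_factor q hq]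
    exact normalize_eq_normalize_iff_associated.mpr <| Ideal.span_singleton_eq_span_singleton.mp
      (Ideal.span_singleton_generator w.asIdeal)

end IsDedekindDomain.HeightOneSpectrum

theorem hilbertFin_eq_ite {p : ℕ} [Fact p.Prime] (v : HeightOneSpectrum (ZMod p)[X])
    (α β : (ZMod p)[X]) :
    hilbertFin p v (algebraMap _ (RatFunc (ZMod p)) α) (algebraMap _ (RatFunc (ZMod p)) β) =
      if IsHilbertTrivial (algebraMap _ (v.adicCompletion (RatFunc (ZMod p))) α)
        (algebraMap _ (v.adicCompletion (RatFunc (ZMod p))) β) then 1 else -1 := by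
  rw [hilbertFin]
  exact if_congr (by simp only [IsHilbertTrivial, ← IsScalarTower.algebraMap_apply]) rfl rfl

theorem legSym_eq_ite {p : ℕ} [Fact p.Prime] {α q : (ZMod p)[X]} (hq : Irreducible q)
    (hqα : ¬ q ∣ α) :
    legSym p α q = if ∃ e, q ∣ e ^ 2 - α then 1 else -1 := by
  rw [legSym, if_neg (not_not.mpr (hq.coprime_iff_not_dvd.mpr hqα))]

theorem two_notMem_asIdeal {p : ℕ} [Fact p.Prime] (hp : p ≠ 2) (v : HeightOneSpectrum (ZMod p)[X]) :
    (2 : (ZMod p)[X]) ∉ v.asIdeal := fun h2 =>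
  v.isPrime.ne_top <| v.asIdeal.eq_top_of_isUnit_mem h2 <| by
    rw [← map_ofNat C 2]
    exact isUnit_C.mpr (Ring.two_ne_zero (by rwa [ZMod.ringChar_zmod_n])).isUnit

theorem hilbertFin_eq_legSym_pow {p : ℕ} [Fact p.Prime] (hp : p ≠ 2) {α β : (ZMod p)[X]}
    (hβ : β ≠ 0) (hcop : IsCoprime α β) {v : HeightOneSpectrum (ZMod p)[X]} (hv : β ∈ v.asIdeal) :
    hilbertFin p v (algebraMap _ (RatFunc (ZMod p)) α) (algebraMap _ (RatFunc (ZMod p)) β) =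
      legSym p α v.normalizedGenerator ^ (normalizedFactors β).count v.normalizedGenerator := by
  have hq := v.asIdeal_eq_span_normalizedGenerator
  have hα : α ∉ v.asIdeal := fun hα => by
    obtain ⟨a, b, hab⟩ := hcop
    exact v.isPrime.ne_top <| v.asIdeal.eq_top_iff_one.mpr <|
      hab ▸ add_mem (v.asIdeal.mul_mem_left a hα) (v.asIdeal.mul_mem_left b hv)
  have : Finite ((ZMod p)[X] ⧸ v.asIdeal) := Ring.HasFiniteQuotients.finiteQuotient v.ne_bot
  have hvβ := v.valued_algebraMap_adicCompletion (K := RatFunc (ZMod p)) β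
  have hβL : algebraMap _ (v.adicCompletion (RatFunc (ZMod p))) β ≠ 0 := fun h =>
    v.intValuation_ne_zero β hβ (by rw [← hvβ, h, map_zero])
  have hsq : IsSquare (Valued.v (algebraMap _ (v.adicCompletion (RatFunc (ZMod p))) β)) ↔
      Even ((normalizedFactors β).count v.normalizedGenerator) := by
    rw [hvβ, v.intValuation_eq_exp_neg_count hq (normalize_idem _) hβ,
      WithZero.isSquare_exp_iff, even_neg, Int.even_coe_nat]
  have hqα : ¬ v.normalizedGenerator ∣ α := by rwa [hq, Ideal.mem_span_singleton] at hα
  rw [hilbertFin_eq_ite, v.isHilbertTrivial_iff (two_notMem_asIdeal hp v) hα hβL, hsq,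
    legSym_eq_ite v.prime_normalizedGenerator.irreducible hqα]
  simp only [hq, Ideal.mem_span_singleton]
  by_cases hres : ∃ e, v.normalizedGenerator ∣ e ^ 2 - α
  · simp [hres]
  · rcases Nat.even_or_odd ((normalizedFactors β).count v.normalizedGenerator) with h | h <;>
      simp [hres, h, h.neg_one_pow]

theorem jacobi_eq_prod_hilbert_general (p : ℕ) [Fact p.Prime] (hp : p % 4 = 1)
    (α β : Polynomial (ZMod p)) (hβ : β ≠ 0) (hcop : IsCoprime α β) :
    jacobiP p α β =
      ∏ᶠ v ∈ {v : HeightOneSpectrum (Polynomial (ZMod p)) | β ∈ v.asIdeal},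
        hilbertFin p v (algebraMap (Polynomial (ZMod p)) (RatFunc (ZMod p)) α)
          (algebraMap (Polynomial (ZMod p)) (RatFunc (ZMod p)) β) := by
  rw [jacobiP, Finset.prod_multiset_map_count, ← finprod_mem_coe_finset]
  exact (finprod_mem_eq_of_bijOn (g := fun q => legSym p α q ^ (normalizedFactors β).count q) _
    (HeightOneSpectrum.bijOn_normalizedGenerator hβ)
    fun v hv => hilbertFin_eq_legSym_pow (by omega) hβ hcop hv).symm

theorem jacobi_eq_prod_hilbert (p : ℕ) [Fact p.Prime] (hp : p % 4 = 1)
    (α β : Polynomial (ZMod p)) (hα : α ≠ 0) (hβ : β ≠ 0) (hcop : IsCoprime α β) :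
    jacobiP p α β =
      ∏ᶠ v ∈ {v : HeightOneSpectrum (Polynomial (ZMod p)) | β ∈ v.asIdeal},
        hilbertFin p v (algebraMap (Polynomial (ZMod p)) (RatFunc (ZMod p)) α)
          (algebraMap (Polynomial (ZMod p)) (RatFunc (ZMod p)) β) :=
  jacobi_eq_prod_hilbert_general p hp α β hβ hcop
end
end

section
/- For real numbers s, y, θ with s > s₀ > 1/2 and setting y = p^{s−1/2} > 1 and α = e^{iθ} on the unit circle: log(p)·|α^{-1} y / (1 − α^{-1} y)²| ≤ (s − 1/2)^{-1}·Re(1/(1 − α p^{1/2−s})). -/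
/-! With `y = p ^ (s - 1/2) > 1` and `‖α‖ = 1`, both sides share the denominator `‖y - α‖²`:
the left side is `log p · y / ‖y - α‖²` and the real part on the right is
`y (y - Re α) / ‖y - α‖²`. The claim therefore reduces to `log y ≤ y - 1 ≤ y - Re α`. -/

namespace Complex

lemma norm_inv_mul_div_one_sub_inv_mul_sq {α : ℂ} (hα : ‖α‖ = 1) (y : ℝ) :
    ‖α⁻¹ * y / (1 - α⁻¹ * y) ^ 2‖ = |y| / ‖(y : ℂ) - α‖ ^ 2 := by
  have hα0 : α ≠ 0 := norm_ne_zero_iff.mp (by rw [hα]; exact one_ne_zero)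
  have hfactor : 1 - α⁻¹ * y = α⁻¹ * (α - y) := by field_simp
  rw [hfactor, norm_div, norm_mul, norm_pow, norm_mul, norm_inv, hα, norm_real,
    Real.norm_eq_abs, norm_sub_rev]
  simp only [inv_one, one_mul]

lemma re_one_div_one_sub_mul_inv {α : ℂ} {y : ℝ} (hy : y ≠ 0) :
    (1 / (1 - α * (y : ℂ)⁻¹)).re = y * (y - α.re) / ‖(y : ℂ) - α‖ ^ 2 := by
  have hyC : (y : ℂ) ≠ 0 := ofReal_ne_zero.mpr hy
  have hrewrite : 1 / (1 - α * (y : ℂ)⁻¹) = y * ((y : ℂ) - α)⁻¹ := by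
    field_simp
  rw [hrewrite, re_ofReal_mul, inv_re, normSq_eq_norm_sq, sub_re, ofReal_re, mul_div_assoc]

lemma log_mul_norm_inv_mul_div_one_sub_inv_mul_sq_le {α : ℂ} (hα : ‖α‖ = 1) {y : ℝ}
    (hy : 1 < y) :
    Real.log y * ‖α⁻¹ * y / (1 - α⁻¹ * y) ^ 2‖ ≤ (1 / (1 - α * (y : ℂ)⁻¹)).re := by
  have hy0 : 0 < y := one_pos.trans hy
  have hdist : 0 < ‖(y : ℂ) - α‖ := by
    refine norm_pos_iff.mpr (sub_ne_zero.mpr fun h => hy.ne' ?_)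
    rw [← hα, ← h, norm_real, Real.norm_of_nonneg hy0.le]
  have hlog : Real.log y ≤ y - α.re :=
    calc Real.log y ≤ y - 1 := Real.log_le_sub_one_of_pos hy0
      _ ≤ y - α.re := by linarith [hα ▸ re_le_norm α]
  rw [norm_inv_mul_div_one_sub_inv_mul_sq hα, re_one_div_one_sub_mul_inv hy0.ne',
    abs_of_pos hy0, ← mul_div_assoc, mul_comm (Real.log y)]
  gcongr

end Complex

theorem log_deriv_term_bound (p : ℝ) (hp : 1 < p) (θ s s₀ : ℝ)
    (hs₀ : s₀ > 1 / 2) (hs : s > s₀) :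
    Real.log p *
        ‖(Complex.exp (θ * Complex.I))⁻¹ * (p : ℂ) ^ ((s : ℂ) - 1 / 2) /
          (1 - (Complex.exp (θ * Complex.I))⁻¹ * (p : ℂ) ^ ((s : ℂ) - 1 / 2)) ^ 2‖ ≤
      (s - 1 / 2)⁻¹ *
        (1 / (1 - Complex.exp (θ * Complex.I) * (p : ℂ) ^ ((1 / 2 : ℂ) - (s : ℂ)))).re := by
  have hp0 : 0 < p := one_pos.trans hp
  have ht : 0 < s - 1 / 2 := by linarith
  have hpow : (p : ℂ) ^ ((s : ℂ) - 1 / 2) = ((p ^ (s - 1 / 2) : ℝ) : ℂ) := by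
    rw [Complex.ofReal_cpow hp0.le]
    push_cast
    rfl
  have hpow_neg : (p : ℂ) ^ ((1 / 2 : ℂ) - (s : ℂ)) = ((p ^ (s - 1 / 2) : ℝ) : ℂ)⁻¹ := by
    rw [← hpow, ← Complex.cpow_neg, neg_sub]
  have hlog : Real.log p = (s - 1 / 2)⁻¹ * Real.log (p ^ (s - 1 / 2)) := by
    rw [Real.log_rpow hp0, inv_mul_cancel_left₀ ht.ne']
  rw [hpow, hpow_neg, hlog, mul_assoc]
  exact mul_le_mul_of_nonneg_left
    (Complex.log_mul_norm_inv_mul_div_one_sub_inv_mul_sq_le (Complex.norm_exp_ofReal_mul_I θ)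
      (Real.one_lt_rpow hp ht))
    (inv_nonneg.mpr ht.le)
end

section
/- Fix real s with |s| < 1 (here s = Re(α) for α on the unit circle). The function F(x) = x^{-1}·(1 − s e^{−x})/(1 − 2s e^{−x} + e^{−2x}) is strictly decreasing for x > 0. -/
/-!
Write `D(x) = 1 - 2 s e⁻ˣ + e⁻²ˣ = (e⁻ˣ - s)² + 1 - s² > 0`. The derivative of the function is
`-e⁻²ˣ W_s(x) / (x D(x))²` with `W_s = auxW s`, so it suffices that `W_s > 0` on `(0, ∞)`. This
holds because `W_s(0) = 2 (1 - s)² ≥ 0` and `W_s'(x) = (eˣ - e⁻ˣ)(2 eˣ + s (x - 2)) > 0` for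
`x > 0`, the second factor being positive since `2 eˣ > 2 + 2x > |x - 2|`.
-/

open Real Set

noncomputable def auxW (s x : ℝ) : ℝ :=
  exp (2 * x) + 1 + 2 * s ^ 2 - 2 * x + s * (x - 3) * exp x + s * (x - 1) * exp (-x)

lemma hasDerivAt_auxW (s x : ℝ) :
    HasDerivAt (auxW s) ((exp x - exp (-x)) * (2 * exp x + s * (x - 2))) x := by
  have hexp2 : HasDerivAt (fun y => exp (2 * y)) (exp (2 * x) * 2) x := by
    simpa using ((hasDerivAt_id x).const_mul 2).exp
  have hexpNeg : HasDerivAt (fun y => exp (-y)) (-exp (-x)) x := by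
    simpa using (hasDerivAt_neg x).exp
  have h : HasDerivAt (auxW s) _ x :=
    ((((hexp2.add_const 1).add_const (2 * s ^ 2)).sub ((hasDerivAt_id x).const_mul 2)).add
      ((((hasDerivAt_id x).sub_const 3).const_mul s).mul (hasDerivAt_exp x))).add
      ((((hasDerivAt_id x).sub_const 1).const_mul s).mul hexpNeg)
  refine h.congr_deriv ?_
  have hexp_two_mul : exp (2 * x) = exp x * exp x := by rw [← exp_add]; ring_nf
  have hexp_mul_exp_neg : exp x * exp (-x) = 1 := by rw [← exp_add]; simp
  simp only [id, hexp_two_mul]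
  linear_combination 2 * hexp_mul_exp_neg

lemma auxW_zero (s : ℝ) : auxW s 0 = 2 * (1 - s) ^ 2 := by
  simp [auxW]; ring

lemma two_mul_exp_add_mul_sub_two_pos {s x : ℝ} (hs : |s| ≤ 1) (hx : 0 < x) :
    0 < 2 * exp x + s * (x - 2) := by
  have hexp : x + 1 < exp x := add_one_lt_exp hx.ne'
  have hbound : |s * (x - 2)| < 2 * exp x :=
    calc |s * (x - 2)| ≤ |x - 2| := by
          rw [abs_mul]; exact mul_le_of_le_one_left (abs_nonneg _) hs
      _ < 2 * exp x := abs_lt.mpr ⟨by linarith, by linarith⟩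
  linarith [neg_abs_le (s * (x - 2))]

lemma strictMonoOn_auxW {s : ℝ} (hs : |s| ≤ 1) : StrictMonoOn (auxW s) (Ici 0) := by
  refine strictMonoOn_of_deriv_pos (convex_Ici 0)
    (fun y _ => (hasDerivAt_auxW s y).continuousAt.continuousWithinAt) fun x hx => ?_
  rw [interior_Ici] at hx
  rw [(hasDerivAt_auxW s x).deriv]
  have hexp : exp (-x) < exp x := exp_lt_exp.mpr (by linarith [mem_Ioi.mp hx])
  exact mul_pos (sub_pos.mpr hexp) (two_mul_exp_add_mul_sub_two_pos hs hx)

lemma auxW_pos {s x : ℝ} (hs : |s| ≤ 1) (hx : 0 < x) : 0 < auxW s x :=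
  calc 0 ≤ auxW s 0 := by rw [auxW_zero]; positivity
    _ < auxW s x := strictMonoOn_auxW hs self_mem_Ici hx.le hx

lemma exp_neg_two_mul (x : ℝ) : exp (-2 * x) = exp (-x) ^ 2 := by
  rw [← exp_nat_mul]; ring_nf

lemma one_sub_two_mul_exp_neg_add_exp_neg_two_mul_pos {s : ℝ} (hs : |s| < 1) (x : ℝ) :
    0 < 1 - 2 * s * exp (-x) + exp (-2 * x) := by
  have : s ^ 2 < 1 := (sq_lt_one_iff_abs_lt_one s).mpr hs
  rw [exp_neg_two_mul]
  nlinarith [sq_nonneg (exp (-x) - s)]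

lemma hasDerivAt_aux_function {s x : ℝ} (hs : |s| < 1) (hx : x ≠ 0) :
    HasDerivAt (fun x : ℝ => x⁻¹ * (1 - s * exp (-x)) / (1 - 2 * s * exp (-x) + exp (-2 * x)))
      (-(exp (-x) ^ 2 * auxW s x) / (x * (1 - 2 * s * exp (-x) + exp (-2 * x))) ^ 2) x := by
  have hexpNeg : HasDerivAt (fun y => exp (-y)) (-exp (-x)) x := by
    simpa using (hasDerivAt_neg x).exp
  have hexpNegTwo : HasDerivAt (fun y => exp (-2 * y)) (exp (-2 * x) * (-2)) x := by
    simpa using ((hasDerivAt_id x).const_mul (-2)).exp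
  have hnum : HasDerivAt (fun y => y⁻¹ * (1 - s * exp (-y)))
      (-(x ^ 2)⁻¹ * (1 - s * exp (-x)) + x⁻¹ * (0 - s * -exp (-x))) x :=
    (hasDerivAt_inv hx).mul ((hasDerivAt_const x 1).sub (hexpNeg.const_mul s))
  have hden : HasDerivAt (fun y => 1 - 2 * s * exp (-y) + exp (-2 * y))
      (0 - 2 * s * -exp (-x) + exp (-2 * x) * (-2)) x :=
    ((hasDerivAt_const x 1).sub (hexpNeg.const_mul (2 * s))).add hexpNegTwo
  have hden_ne := (one_sub_two_mul_exp_neg_add_exp_neg_two_mul_pos hs x).ne'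
  refine (hnum.div hden hden_ne).congr_deriv ?_
  have hexp : exp x = (exp (-x))⁻¹ := by rw [exp_neg, inv_inv]
  have hexp_two_mul : exp (2 * x) = ((exp (-x))⁻¹) ^ 2 := by
    rw [← hexp, ← exp_nat_mul]; ring_nf
  rw [exp_neg_two_mul] at hden_ne ⊢
  rw [auxW, hexp_two_mul, hexp]
  have hexp_ne : exp (-x) ≠ 0 := (exp_pos (-x)).ne'
  field_simp
  ring

theorem aux_function_strictAnti (s : ℝ) (hs : |s| < 1) :
    StrictAntiOn
      (fun x : ℝ => x⁻¹ * (1 - s * Real.exp (-x)) /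
        (1 - 2 * s * Real.exp (-x) + Real.exp (-2 * x)))
      (Set.Ioi (0 : ℝ)) := by
  have hderiv (x : ℝ) (hx : x ∈ Ioi 0) := hasDerivAt_aux_function hs (ne_of_gt hx)
  refine strictAntiOn_of_deriv_neg (convex_Ioi 0)
    (fun x hx => (hderiv x hx).continuousAt.continuousWithinAt) fun x hx => ?_
  rw [interior_Ioi] at hx
  rw [(hderiv x hx).deriv, neg_div, neg_lt_zero]
  exact div_pos (mul_pos (pow_pos (exp_pos _) 2) (auxW_pos hs.le hx))
    (pow_pos (mul_pos hx (one_sub_two_mul_exp_neg_add_exp_neg_two_mul_pos hs x)) 2)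
end

section
/- Let F be a family of smooth projective geometrically irreducible curves over F_p with genus tending to infinity. If the gonality satisfies G(X) = o(g(X)) as X ranges over F, then F is a Lindelöf family: max_{|t| = p^{-1/2}} |P(t,X)| = O_ε(p^{ε g(X)}) for every ε > 0. -/
/-! On the circle `‖t‖ = p^{-1/2}` the factors of `P(t, X)` are `1 - zᵢ` with `‖zᵢ‖ = 1`.
Pushing the `zᵢ` inward to radius `ρ < 1` costs at most `ρ^{-1/2}` per factor, and there
`log ‖1 - ρ z‖` is `-Re ∑_{r ≤ R} (ρ z)^r / r` up to a tail `ρ^{R+1} / (1 - ρ)`. Hence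
`log ‖P‖ ≤ 2g (-log ρ / 2 + ρ^{R+1} / (1 - ρ)) + R · max_{1 ≤ r ≤ R} ‖∑ zᵢ^r‖`. The first term is
`≤ ε g log p / 2` once `ρ` is close to `1` and `R` large, and by the Weil formula and the gonality
bound the `r`-th power sum is `O(G p^{r/2})`, which for fixed `R` is `o(g)`. -/

open Filter Finset

lemma norm_one_sub_le_of_norm_eq_one {z : ℂ} (hz : ‖z‖ = 1) {ρ : ℝ} (hρ : 0 < ρ) :
    ‖1 - z‖ ≤ (√ρ)⁻¹ * ‖1 - ρ * z‖ := by
  have hz' : z.re * z.re + z.im * z.im = 1 := by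
    rw [← Complex.normSq_apply, ← Complex.sq_norm, hz, one_pow]
  -- `‖1 - ρ z‖² = ρ ‖1 - z‖² + (1 - ρ)²` on the unit circle
  have hsq : (√ρ * ‖1 - z‖) ^ 2 ≤ ‖1 - ρ * z‖ ^ 2 := by
    rw [mul_pow, Real.sq_sqrt hρ.le, Complex.sq_norm, Complex.sq_norm, Complex.normSq_apply,
      Complex.normSq_apply]
    simp only [Complex.sub_re, Complex.sub_im, Complex.mul_re, Complex.mul_im,
      Complex.ofReal_re, Complex.ofReal_im, Complex.one_re, Complex.one_im]
    nlinarith [sq_nonneg (1 - ρ)]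
  rw [le_inv_mul_iff₀ (Real.sqrt_pos.2 hρ)]
  exact (pow_le_pow_iff_left₀ (by positivity) (norm_nonneg _) two_ne_zero).1 hsq

lemma logTaylor_neg (n : ℕ) (w : ℂ) :
    Complex.logTaylor n (-w) = -∑ r ∈ range n, w ^ r / r := by
  rw [Complex.logTaylor, ← sum_neg_distrib]
  refine sum_congr rfl fun r _ => ?_
  rw [neg_pow, pow_succ, ← neg_div]
  ring_nf
  rw [mul_comm r 2, pow_mul]
  norm_num

lemma norm_one_sub_le_exp {w : ℂ} {ρ : ℝ} (hρ : ρ < 1) (hw : ‖w‖ ≤ ρ) (R : ℕ) :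
    ‖1 - w‖ ≤ Real.exp (-(∑ r ∈ range (R + 1), w ^ r / r).re + ρ ^ (R + 1) / (1 - ρ)) := by
  have hw1 : ‖w‖ < 1 := hw.trans_lt hρ
  have hne : 1 - w ≠ 0 := fun h => by
    rw [← sub_eq_zero.1 h, norm_one] at hw1
    exact lt_irrefl _ hw1
  have htaylor := Complex.norm_log_sub_logTaylor_le R (show ‖-w‖ < 1 by rwa [norm_neg])
  rw [logTaylor_neg, ← sub_eq_add_neg, norm_neg] at htaylor
  have hrem : ‖w‖ ^ (R + 1) * (1 - ‖w‖)⁻¹ / (R + 1) ≤ ρ ^ (R + 1) / (1 - ρ) := by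
    have hρ0 : 0 ≤ ρ := (norm_nonneg w).trans hw
    rw [div_eq_mul_inv _ (1 - ρ)]
    calc ‖w‖ ^ (R + 1) * (1 - ‖w‖)⁻¹ / (R + 1) ≤ ‖w‖ ^ (R + 1) * (1 - ‖w‖)⁻¹ :=
          div_le_self (by have := sub_pos.2 hw1; positivity) (by linarith)
      _ ≤ ρ ^ (R + 1) * (1 - ρ)⁻¹ := by have := sub_pos.2 hρ; gcongr
  rw [← Complex.exp_log hne, Complex.norm_exp, Real.exp_le_exp]
  have hre := Complex.re_le_norm (Complex.log (1 - w) - -∑ r ∈ range (R + 1), w ^ r / r)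
  rw [Complex.sub_re, Complex.neg_re] at hre
  linarith

section

variable {ι : Type*} [Fintype ι]

lemma norm_sum_mul_pow_div (z : ι → ℂ) {ρ : ℝ} (hρ : 0 ≤ ρ) (r : ℕ) :
    ‖∑ i, (ρ * z i) ^ r / r‖ = ρ ^ r / r * ‖∑ i, z i ^ r‖ := by
  have h : ∑ i, (ρ * z i) ^ r / r = ((ρ ^ r / r : ℝ) : ℂ) * ∑ i, z i ^ r := by
    rw [mul_sum]
    refine sum_congr rfl fun i _ => ?_
    push_cast
    ring
  rw [h, norm_mul, Complex.norm_real, Real.norm_of_nonneg (by positivity)]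

lemma norm_sum_sum_pow_div_le (z : ι → ℂ) {ρ : ℝ} (hρ0 : 0 ≤ ρ) (hρ1 : ρ ≤ 1) {R : ℕ} {B : ℝ}
    (hS : ∀ r, 1 ≤ r → r ≤ R → ‖∑ i, z i ^ r‖ ≤ B) :
    ‖∑ i, ∑ r ∈ range (R + 1), (ρ * z i) ^ r / r‖ ≤ R * B := by
  -- the `r = 0` term vanishes because `x / 0 = 0`
  rw [sum_comm, sum_range_succ']
  simp only [Nat.cast_zero, div_zero, sum_const_zero, add_zero]
  refine (norm_sum_le _ _).trans ?_
  calc ∑ r ∈ range R, ‖∑ i, (ρ * z i) ^ (r + 1) / ((r + 1 : ℕ) : ℂ)‖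
      ≤ ∑ _r ∈ range R, B := sum_le_sum fun r hr => by
        have hcoef : ρ ^ (r + 1) / (r + 1 : ℕ) ≤ 1 :=
          div_le_one_of_le₀ ((pow_le_one₀ hρ0 hρ1).trans (by simp)) (Nat.cast_nonneg _)
        rw [norm_sum_mul_pow_div z hρ0]
        exact (mul_le_of_le_one_left (norm_nonneg _) hcoef).trans
          (hS _ r.succ_pos (mem_range.1 hr))
    _ = R * B := by simp

lemma norm_prod_one_sub_le (z : ι → ℂ) (hz : ∀ i, ‖z i‖ = 1) {ρ : ℝ} (hρ0 : 0 < ρ) (hρ1 : ρ < 1)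
    {R : ℕ} {B : ℝ} (hS : ∀ r, 1 ≤ r → r ≤ R → ‖∑ i, z i ^ r‖ ≤ B) :
    ‖∏ i, (1 - z i)‖ ≤
      Real.exp (Fintype.card ι * (-Real.log ρ / 2 + ρ ^ (R + 1) / (1 - ρ)) + R * B) := by
  set T := ρ ^ (R + 1) / (1 - ρ)
  have hsqrt : (√ρ)⁻¹ = Real.exp (-Real.log ρ / 2) := by
    rw [neg_div, Real.exp_neg, ← Real.log_sqrt hρ0.le, Real.exp_log (Real.sqrt_pos.2 hρ0)]
  have hρz : ∀ i, ‖(ρ : ℂ) * z i‖ ≤ ρ := fun i => by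
    rw [norm_mul, hz, mul_one, Complex.norm_real, Real.norm_of_nonneg hρ0.le]
  have hre : ∑ i, -(∑ r ∈ range (R + 1), (ρ * z i) ^ r / r).re ≤ R * B :=
    calc ∑ i, -(∑ r ∈ range (R + 1), (ρ * z i) ^ r / r).re
        = -(∑ i, ∑ r ∈ range (R + 1), (ρ * z i) ^ r / r).re := by
          rw [Complex.re_sum, sum_neg_distrib]
      _ ≤ ‖∑ i, ∑ r ∈ range (R + 1), (ρ * z i) ^ r / r‖ :=
          (neg_le_abs _).trans (Complex.abs_re_le_norm _)
      _ ≤ R * B := norm_sum_sum_pow_div_le z hρ0.le hρ1.le hS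
  calc ‖∏ i, (1 - z i)‖ ≤ ∏ i, (√ρ)⁻¹ * ‖1 - ρ * z i‖ := by
        rw [norm_prod]
        exact prod_le_prod (fun _ _ => norm_nonneg _)
          fun i _ => norm_one_sub_le_of_norm_eq_one (hz i) hρ0
    _ ≤ ∏ i, Real.exp (-Real.log ρ / 2 + (-(∑ r ∈ range (R + 1), (ρ * z i) ^ r / r).re + T)) :=
        prod_le_prod (fun _ _ => by positivity) fun i _ => by
          rw [hsqrt, Real.exp_add]
          gcongr
          exact norm_one_sub_le_exp hρ1 (hρz i) R
    _ ≤ _ := by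
        rw [← Real.exp_sum, Real.exp_le_exp, sum_add_distrib, sum_add_distrib, sum_const, sum_const,
          card_univ, nsmul_eq_mul, nsmul_eq_mul]
        linarith

lemma norm_sum_mul_pow_of_norm_eq_one (a : ι → ℂ) {c : ℂ} (hc : ‖c‖ = 1) (r : ℕ) :
    ‖∑ i, (c * a i) ^ r‖ = ‖∑ i, a i ^ r‖ := by
  simp_rw [mul_pow, ← mul_sum, norm_mul, norm_pow, hc, one_pow, one_mul]

end

lemma exists_norm_prod_one_sub_le {η : ℝ} (hη : 0 < η) :
    ∃ R : ℕ, ∀ {ι : Type*} [Fintype ι] (z : ι → ℂ), (∀ i, ‖z i‖ = 1) → ∀ B : ℝ,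
      (∀ r, 1 ≤ r → r ≤ R → ‖∑ i, z i ^ r‖ ≤ B) →
      ‖∏ i, (1 - z i)‖ ≤ Real.exp (η * Fintype.card ι + R * B) := by
  set ρ := Real.exp (-η)
  have hρ0 : 0 < ρ := Real.exp_pos _
  have hρ1 : ρ < 1 := Real.exp_lt_one_iff.2 (neg_neg_of_pos hη)
  obtain ⟨R, hR⟩ := exists_pow_lt_of_lt_one (mul_pos (half_pos hη) (sub_pos.2 hρ1)) hρ1
  have hT : ρ ^ (R + 1) / (1 - ρ) ≤ η / 2 := by
    rw [div_le_iff₀ (sub_pos.2 hρ1)]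
    exact (pow_le_pow_of_le_one hρ0.le hρ1.le R.le_succ).trans hR.le
  refine ⟨R, fun z hz B hS => (norm_prod_one_sub_le z hz hρ0 hρ1 hS).trans ?_⟩
  rw [Real.exp_le_exp, Real.log_exp, mul_comm η]
  gcongr
  linarith

lemma exists_pos_forall_le_mul_of_eventually_le {ι : Type*} {f : ℕ → ι → ℝ} {w : ℕ → ℝ}
    (hw : ∀ j, 0 < w j) (hbdd : ∀ j, ∃ M, ∀ i, f j i ≤ M)
    (hev : ∀ᶠ j in atTop, ∀ i, f j i ≤ w j) :
    ∃ C, 0 < C ∧ ∀ j i, f j i ≤ C * w j := by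
  obtain ⟨J, hJ⟩ := eventually_atTop.1 hev
  choose M hM using hbdd
  have hterm : ∀ j, 0 ≤ |M j| / w j := fun j => div_nonneg (abs_nonneg _) (hw j).le
  have hsum : 0 ≤ ∑ j ∈ range J, |M j| / w j := sum_nonneg fun j _ => hterm j
  refine ⟨1 + ∑ j ∈ range J, |M j| / w j, by linarith, fun j i => ?_⟩
  by_cases hj : J ≤ j
  · exact (hJ j hj i).trans (le_mul_of_one_le_left (hw j).le (by linarith))
  · calc f j i ≤ |M j| / w j * w j := by
          rw [div_mul_cancel₀ _ (hw j).ne']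
          exact (hM j i).trans (le_abs_self _)
      _ ≤ _ := mul_le_mul_of_nonneg_right ((single_le_sum (fun j _ => hterm j)
          (mem_range.2 (not_le.1 hj))).trans (le_add_of_nonneg_left zero_le_one)) (hw j).le

lemma isLittleO_add_one_of_tendsto_div {α : Type*} {l : Filter α} {u v : α → ℝ}
    (hv : Tendsto v l atTop) (huv : Tendsto (fun j => u j / v j) l (nhds 0)) :
    (fun j => u j + 1) =o[l] v := by
  have hu : u =o[l] v := (Asymptotics.isLittleO_iff_tendsto'
    ((hv.eventually_ne_atTop 0).mono fun _ hj h => absurd h hj)).2 huv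
  exact hu.add ((Asymptotics.isLittleO_one_left_iff ℝ).2 (tendsto_norm_atTop_atTop.comp hv))

lemma norm_powerSum_le_of_pointCount {q N G : ℝ} (hq : 1 ≤ q) {r : ℕ} {S : ℂ} (hN0 : 0 ≤ N)
    (hNG : N ≤ G * (q ^ r + 1)) (hN : (N : ℂ) = q ^ r + 1 - (√q : ℂ) ^ r * S) :
    ‖S‖ ≤ 2 * √q ^ r * (G + 1) := by
  have hsq : 0 < √q ^ r := pow_pos (Real.sqrt_pos.2 (by linarith)) r
  have hS : √q ^ r * ‖S‖ = |q ^ r + 1 - N| := by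
    have h : (√q : ℂ) ^ r * S = ((q ^ r + 1 - N : ℝ) : ℂ) := by push_cast; linear_combination hN
    rw [← Real.norm_eq_abs, ← Complex.norm_real, ← h, norm_mul, norm_pow, Complex.norm_real,
      Real.norm_of_nonneg (Real.sqrt_nonneg _)]
  have hqr : √q ^ r * √q ^ r = q ^ r := by rw [← mul_pow, Real.mul_self_sqrt (by linarith)]
  have hq1 : 1 ≤ q ^ r := one_le_pow₀ hq
  have hG : 0 ≤ G := nonneg_of_mul_nonneg_left (hN0.trans hNG) (by positivity)
  refine le_of_mul_le_mul_left ?_ hsq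
  rw [hS, abs_le]
  constructor <;> nlinarith

lemma exists_norm_prod_le_exp_of_gonality_bound {q : ℝ} (hq : 1 ≤ q) {η : ℝ} (hη : 0 < η) :
    ∃ R : ℕ, ∀ {ι : Type*} [Fintype ι] (α : ι → ℂ) (N : ℕ → ℕ) (G : ℝ), (∀ i, ‖α i‖ = 1) →
      (∀ r, 1 ≤ r → (N r : ℝ) ≤ G * (q ^ r + 1)) →
      (∀ r, 1 ≤ r → (N r : ℂ) = q ^ r + 1 - (√q : ℂ) ^ r * ∑ i, α i ^ r) →
      ∀ t : ℂ, ‖t‖ = (√q)⁻¹ →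
      ‖∏ i, (1 - (√q : ℂ) * α i * t)‖ ≤
        Real.exp (η * Fintype.card ι + R * (2 * √q ^ R * (G + 1))) := by
  obtain ⟨R, hR⟩ := exists_norm_prod_one_sub_le hη
  refine ⟨R, fun α N G hα hNG hN t ht => ?_⟩
  have hsq : 1 ≤ √q := Real.one_le_sqrt.2 hq
  have hscale : ‖(√q : ℂ) * t‖ = 1 := by
    rw [norm_mul, ht, Complex.norm_real, Real.norm_of_nonneg (by linarith),
      mul_inv_cancel₀ (by positivity)]
  simp_rw [mul_right_comm _ (α _) t]
  refine hR _ (fun i => by rw [norm_mul, hscale, hα, one_mul]) _ fun r hr hrR => ?_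
  rw [norm_sum_mul_pow_of_norm_eq_one _ hscale]
  refine (norm_powerSum_le_of_pointCount hq (Nat.cast_nonneg _) (hNG r hr) (hN r hr)).trans ?_
  have hG : 0 ≤ G + 1 := by
    have := (Nat.cast_nonneg _).trans (hNG r hr)
    nlinarith [one_le_pow₀ (n := r) hq]
  gcongr

theorem gonality_o_genus_implies_lindelof_general (p : ℕ) (hp : p.Prime)
    (g G : ℕ → ℕ) (α : (j : ℕ) → Fin (2 * g j) → ℂ)
    (hα : ∀ j i, ‖α j i‖ = 1)
    (N : ℕ → ℕ → ℕ)
    (hcount : ∀ j (r : ℕ), 1 ≤ r →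
      (N j r : ℂ) = (p : ℂ) ^ r + 1 - (Real.sqrt p : ℂ) ^ r * ∑ i, α j i ^ r)
    (hgonality : ∀ j (r : ℕ), 1 ≤ r → (N j r : ℝ) ≤ (G j : ℝ) * ((p : ℝ) ^ r + 1))
    (hgen : Tendsto (fun j => (g j : ℝ)) atTop atTop)
    (hsmall : Tendsto (fun j => (G j : ℝ) / (g j : ℝ)) atTop (nhds 0)) :
    ∀ ε : ℝ, 0 < ε → ∃ C : ℝ, 0 < C ∧ ∀ j, ∀ t : ℂ,
      ‖t‖ = (Real.sqrt p)⁻¹ →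
      ‖∏ i, (1 - (Real.sqrt p : ℂ) * α j i * t)‖ ≤
        C * (p : ℝ) ^ (ε * g j) := by
  intro ε hε
  have hp1 : (1 : ℝ) < p := by exact_mod_cast hp.one_lt
  set κ := ε * Real.log p
  have hκ : 0 < κ := mul_pos hε (Real.log_pos hp1)
  obtain ⟨R, hR⟩ := exists_norm_prod_le_exp_of_gonality_bound hp1.le (div_pos hκ four_pos)
  have hP : ∀ j (t : {t : ℂ // ‖t‖ = (√p)⁻¹}), ‖∏ i, (1 - (√p : ℂ) * α j i * t)‖ ≤
      Real.exp (κ / 4 * (2 * g j) + R * (2 * √p ^ R * (G j + 1))) := fun j t => by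
    simpa using hR (α j) (N j) (G j) (hα j) (hgonality j)
      (fun r hr => by exact_mod_cast hcount j r hr) t t.2
  have hpowerSums : ∀ᶠ j in atTop, R * (2 * √p ^ R * (G j + 1)) ≤ κ / 2 * g j := by
    filter_upwards [(((isLittleO_add_one_of_tendsto_div hgen hsmall).const_mul_left
      (2 * √p ^ R)).const_mul_left (R : ℝ)).def (half_pos hκ)] with j hj
    rwa [Real.norm_of_nonneg (by positivity), Real.norm_of_nonneg (by positivity)] at hj
  obtain ⟨C, hC, hle⟩ := exists_pos_forall_le_mul_of_eventually_le
      (w := fun j => (p : ℝ) ^ (ε * g j)) (fun j => by positivity) (fun j => ⟨_, hP j⟩) <|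
    hpowerSums.mono fun j hj t => (hP j t).trans <| by
      rw [Real.rpow_def_of_pos (by linarith), Real.exp_le_exp]
      linarith
  exact ⟨C, hC, fun j t ht => hle j ⟨t, ht⟩⟩

theorem gonality_o_genus_implies_lindelof (p : ℕ) (hp : p.Prime)
    (g G : ℕ → ℕ) (α : (j : ℕ) → Fin (2 * g j) → ℂ)
    (hα : ∀ j i, ‖α j i‖ = 1)
    -- the numerator has real coefficients (zeros closed under conjugation)
    (hreal : ∀ j (r : ℕ), (∑ i, α j i ^ r).im = 0)
    (N : ℕ → ℕ → ℕ)
    (hcount : ∀ j (r : ℕ), 1 ≤ r →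
      (N j r : ℂ) = (p : ℂ) ^ r + 1 - (Real.sqrt p : ℂ) ^ r * ∑ i, α j i ^ r)
    (hgonality : ∀ j (r : ℕ), 1 ≤ r → (N j r : ℝ) ≤ (G j : ℝ) * ((p : ℝ) ^ r + 1))
    (hgen : Tendsto (fun j => (g j : ℝ)) atTop atTop)
    (hsmall : Tendsto (fun j => (G j : ℝ) / (g j : ℝ)) atTop (nhds 0)) :
    ∀ ε : ℝ, 0 < ε → ∃ C : ℝ, 0 < C ∧ ∀ j, ∀ t : ℂ,
      ‖t‖ = (Real.sqrt p)⁻¹ →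
      ‖∏ i, (1 - (Real.sqrt p : ℂ) * α j i * t)‖ ≤
        C * (p : ℝ) ^ (ε * g j) :=
  gonality_o_genus_implies_lindelof_general p hp g G α hα N hcount hgonality hgen hsmall
end
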